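/- Every access sequence in a binary search tree T consisting of M cursor moves and R rotations can be simulated by a restricted access sequence in a tree T' (with two extra sentinel keys) using at most 4M + 3R cursor moves and 2M + R rotations, where in the restricted sequence every visited or rotated node has depth less than 3 and the cursor returns to the root after every rotation. -/

import Mathlib

/-! A model of binary search trees with a cursor.  Allowed operations: move the
cursor to the left child, right child or parent, and rotate the node at the
cursor upward.  We formalize the simulation lemma: any access sequence with `M`
moves and `R` rotations on a tree `T` can be simulated by a *restricted*
sequence on a tree `T'` (with two sentinel keys `⊥` and `⊤`) using at most
`4M + 3R` moves and `2M + R` rotations, where every visited or rotated node has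
depth `< 3` and the cursor returns to the root after every rotation. -/

/-- A finite binary tree with keys at its nodes. -/
inductive KTree (α : Type*) where
  | leaf : KTree α
  | node : KTree α → α → KTree α → KTree α

/-- Direction from a node to one of its children. -/
inductive Dir where
  | L : Dir
  | R : Dir
deriving DecidableEq

/-- A position in a tree: the list of directions from the root. -/
abbrev TPath := List Dir

/-- The subtree rooted at a given position, if it exists. -/
def subtreeAt {α : Type*} : KTree α → TPath → Option (KTree α)
  | t, [] => some t
  | KTree.leaf, _ :: _ => none
  | KTree.node l _ _, Dir.L :: p => subtreeAt l p
  | KTree.node _ _ r, Dir.R :: p => subtreeAt r p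

/-- The key stored at a given position, if there is a node there. -/
def keyAt {α : Type*} (t : KTree α) (p : TPath) : Option α :=
  match subtreeAt t p with
  | some (KTree.node _ x _) => some x
  | _ => none

/-- Rotate the child of the root in direction `d` upward (a single rotation). -/
def rotateRoot {α : Type*} : KTree α → Dir → KTree α
  | KTree.node (KTree.node a x b) y c, Dir.L => KTree.node a x (KTree.node b y c)
  | KTree.node a y (KTree.node b x c), Dir.R => KTree.node (KTree.node a y b) x c
  | t, _ => t

/-- Rotate the node at position `p` (with `p ≠ []`) upward. -/
def rotateAt {α : Type*} : KTree α → TPath → KTree α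
  | t, [] => t
  | t, [d] => rotateRoot t d
  | KTree.node l x r, Dir.L :: p => KTree.node (rotateAt l p) x r
  | KTree.node l x r, Dir.R :: p => KTree.node l x (rotateAt r p)
  | KTree.leaf, _ => KTree.leaf

/-- The operations of the BST-with-cursor model. -/
inductive Op where
  | up : Op                -- move the cursor to the parent
  | down : Dir → Op        -- move the cursor to a child
  | rotate : Op            -- rotate the node at the cursor upward
deriving DecidableEq

/-- `Op.rotate` counts as a rotation; the other operations are cursor moves. -/
def Op.isMove : Op → Bool
  | Op.rotate => false
  | _ => true

/-- One execution step on a state (tree, cursor position).  After a rotation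
    the rotated node sits where its parent was, so the cursor path shortens. -/
def step {α : Type*} : KTree α × TPath → Op → KTree α × TPath
  | (t, p), Op.up => (t, p.dropLast)
  | (t, p), Op.down d => (t, p ++ [d])
  | (t, p), Op.rotate => (rotateAt t p, p.dropLast)

/-- The list of states reached after each operation. -/
def run {α : Type*} : KTree α × TPath → List Op → List (KTree α × TPath)
  | _, [] => []
  | s, o :: os => step s o :: run (step s o) os

/-- Validity of an operation sequence from a given state: the cursor always
    stays on an existing node, `up` and `rotate` are not applied at the root. -/
def ValidOps {α : Type*} : KTree α × TPath → List Op → Prop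
  | _, [] => True
  | (t, p), o :: os =>
      (match o with
        | Op.up => p ≠ []
        | Op.down d => (keyAt t (p ++ [d])).isSome
        | Op.rotate => p ≠ []) ∧ ValidOps (step (t, p) o) os

/-- The sequence of keys visited by the cursor (initial state included). -/
def visitedKeys {α : Type*} (t : KTree α) (ops : List Op) : List α :=
  ((t, ([] : TPath)) :: run (t, []) ops).filterMap fun s => keyAt s.1 s.2

/-- The multiset of keys of a tree. -/
def keys {α : Type*} : KTree α → Multiset α
  | KTree.leaf => 0
  | KTree.node l x r => x ::ₘ (keys l + keys r)

/-- A restricted access sequence: every node visited by the cursor (hence every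
    rotated node) has depth less than `3`, and after each rotation the cursor
    returns to the root before any further rotation is performed. -/
def Restricted {α : Type*} (t : KTree α) (ops : List Op) : Prop :=
  let states := (t, ([] : TPath)) :: run (t, []) ops
  (∀ s ∈ states, s.2.length < 3) ∧
  ∀ i : Fin ops.length, ops.get i = Op.rotate →
    ∃ j : Fin states.length, (i : ℕ) < (j : ℕ) ∧ (states.get j).2 = [] ∧
      ∀ l : Fin ops.length, (i : ℕ) < (l : ℕ) → (l : ℕ) < (j : ℕ) →
        ops.get l ≠ Op.rotate

/-! The simulating tree always has the node under `T`'s cursor at its root. The cursor node's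
two subtrees hang one level lower, below two *frame* nodes: the in-order neighbours of the
cursor's subtree among its ancestors (initially the sentinels), whose outer subtrees hold the
rest of `T`. A move of `T`'s cursor or a rotation at it changes this picture only near the root,
so it can be replayed by at most two rotations at depth `≤ 2` that rebuild the same shape around
the new cursor node, starting and ending at the root: four moves and two rotations per move, three
moves and one rotation per rotation. -/

def KTree.map {α γ : Type*} (f : α → γ) : KTree α → KTree γ
  | .leaf => .leaf
  | .node l x r => .node (l.map f) (f x) (r.map f)

lemma KTree.keys_map {α γ : Type*} (f : α → γ) (t : KTree α) :
    keys (t.map f) = (keys t).map f := by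
  induction t with
  | leaf => rfl
  | node l x r ihl ihr => simp [KTree.map, keys, ihl, ihr]

def KTree.child {α : Type*} : KTree α → Dir → KTree α
  | .node l _ _, .L => l
  | .node _ _ r, .R => r
  | .leaf, _ => .leaf

def Dir.opp : Dir → Dir
  | .L => .R
  | .R => .L

namespace BSTSim

variable {α γ : Type*}

def nextPath (p : TPath) : Op → TPath
  | .down d => p ++ [d]
  | _ => p.dropLast

lemma step_snd (s : KTree α × TPath) (o : Op) : (step s o).2 = nextPath s.2 o := by
  obtain ⟨t, p⟩ := s
  cases o <;> rfl

def exec (s : KTree α × TPath) (ops : List Op) : KTree α × TPath := ops.foldl step s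

@[simp] lemma exec_nil (s : KTree α × TPath) : exec s [] = s := rfl

@[simp] lemma exec_cons (s : KTree α × TPath) (o : Op) (ops : List Op) :
    exec s (o :: ops) = exec (step s o) ops := rfl

lemma run_append (s : KTree α × TPath) (a b : List Op) :
    run s (a ++ b) = run s a ++ run (exec s a) b := by
  induction a generalizing s with
  | nil => rfl
  | cons o a ih => simp [run, ih]

lemma suffix_run_append {a : List Op} (ha : a ≠ []) (s : KTree α × TPath) (b : List Op) :
    exec s a :: run (exec s a) b <:+ run s (a ++ b) := by
  induction a generalizing s with
  | nil => contradiction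
  | cons o a ih =>
    rcases eq_or_ne a [] with rfl | ha'
    · exact List.suffix_refl _
    · exact (ih ha' (step s o)).trans (List.suffix_cons _ _)

lemma validOps_append (s : KTree α × TPath) (a b : List Op) :
    ValidOps s (a ++ b) ↔ ValidOps s a ∧ ValidOps (exec s a) b := by
  induction a generalizing s with
  | nil => simp [ValidOps]
  | cons o a ih =>
    obtain ⟨t, p⟩ := s
    simp only [List.cons_append, ValidOps, ih, exec_cons, and_assoc]

def visitedKeysFrom (s : KTree α × TPath) (ops : List Op) : List α :=
  (s :: run s ops).filterMap fun s => keyAt s.1 s.2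

lemma visitedKeysFrom_cons {s : KTree α × TPath} {x : α} (hx : keyAt s.1 s.2 = some x)
    (o : Op) (ops : List Op) :
    visitedKeysFrom s (o :: ops) = x :: visitedKeysFrom (step s o) ops := by
  simp [visitedKeysFrom, run, hx]

def moves (ops : List Op) : ℕ := (ops.filter fun o => o.isMove).length

def rotations (ops : List Op) : ℕ := (ops.filter fun o => o = Op.rotate).length

lemma moves_append (a b : List Op) : moves (a ++ b) = moves a + moves b := by
  simp [moves]

lemma rotations_append (a b : List Op) : rotations (a ++ b) = rotations a + rotations b := by
  simp [rotations]

def ReturnsToRoot : TPath → List Op → Prop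
  | [], _ => True
  | _ :: _, [] => False
  | p, o :: os => o ≠ Op.rotate ∧ ReturnsToRoot (nextPath p o) os

/-- `Restricted`, read off the cursor paths alone and started at the path `p`. -/
def RestrictedFrom : TPath → List Op → Prop
  | _, [] => True
  | p, o :: os => (nextPath p o).length < 3 ∧
      (o = Op.rotate → ReturnsToRoot (nextPath p o) os) ∧ RestrictedFrom (nextPath p o) os

lemma ReturnsToRoot.append {p : TPath} {a : List Op} (h : ReturnsToRoot p a) (b : List Op) :
    ReturnsToRoot p (a ++ b) := by
  induction a generalizing p with
  | nil => cases p <;> simp_all [ReturnsToRoot]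
  | cons o a ih => cases p <;> simp_all [ReturnsToRoot]

lemma RestrictedFrom.append {s : KTree α × TPath} {a b : List Op} (ha : RestrictedFrom s.2 a)
    (hs : (exec s a).2 = []) (hb : RestrictedFrom [] b) : RestrictedFrom s.2 (a ++ b) := by
  induction a generalizing s with
  | nil => simp_all
  | cons o a ih =>
    obtain ⟨hlen, hrot, ha⟩ := ha
    rw [← step_snd] at hlen hrot ha
    exact ⟨by rwa [← step_snd], fun h => by rw [← step_snd]; exact (hrot h).append b,
      by rw [← step_snd]; exact ih ha hs⟩

lemma ReturnsToRoot.exists_root {s : KTree α × TPath} {ops : List Op}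
    (h : ReturnsToRoot s.2 ops) :
    ∃ j : Fin (s :: run s ops).length, ((s :: run s ops).get j).2 = [] ∧
      ∀ l : Fin ops.length, (l : ℕ) < j → ops.get l ≠ Op.rotate := by
  induction ops generalizing s with
  | nil =>
    obtain ⟨t, _ | ⟨d, p⟩⟩ := s
    · exact ⟨0, rfl, fun l => l.elim0⟩
    · exact h.elim
  | cons o os ih =>
    obtain ⟨t, _ | ⟨d, p⟩⟩ := s
    · exact ⟨0, rfl, fun _ hl => absurd hl (Nat.not_lt_zero _)⟩
    obtain ⟨ho, h⟩ := h
    obtain ⟨j, hj, hbefore⟩ := ih (s := step (t, d :: p) o) (by rwa [step_snd])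
    refine ⟨j.succ.cast (by simp [run]), hj, fun ⟨l, hl⟩ hlj => ?_⟩
    cases l with
    | zero => exact ho
    | succ l => exact hbefore ⟨l, Nat.lt_of_succ_lt_succ hl⟩ (Nat.lt_of_succ_lt_succ hlj)

lemma RestrictedFrom.length_lt {s : KTree α × TPath} {ops : List Op}
    (h : RestrictedFrom s.2 ops) : ∀ x ∈ run s ops, x.2.length < 3 := by
  induction ops generalizing s with
  | nil => simp [run]
  | cons o os ih =>
    obtain ⟨hlen, -, h⟩ := h
    rw [← step_snd] at hlen h
    simpa [run, hlen] using ih h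

lemma RestrictedFrom.returnsToRoot_after_rotation {s : KTree α × TPath} {ops : List Op}
    (h : RestrictedFrom s.2 ops) (i : Fin ops.length) (hi : ops.get i = Op.rotate) :
    ∃ j : Fin (s :: run s ops).length, (i : ℕ) < j ∧ ((s :: run s ops).get j).2 = [] ∧
      ∀ l : Fin ops.length, (i : ℕ) < l → (l : ℕ) < j → ops.get l ≠ Op.rotate := by
  induction ops generalizing s with
  | nil => exact i.elim0
  | cons o os ih =>
    obtain ⟨-, hrot, h⟩ := h
    rw [← step_snd] at hrot h
    obtain ⟨_ | i, hi'⟩ := i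
    · obtain ⟨j, hj, hbefore⟩ := (hrot hi).exists_root
      refine ⟨j.succ.cast (by simp [run]), Nat.succ_pos _, hj, fun ⟨l, hl⟩ hil hlj => ?_⟩
      cases l with
      | zero => exact absurd hil (lt_irrefl 0)
      | succ l => exact hbefore ⟨l, Nat.lt_of_succ_lt_succ hl⟩ (Nat.lt_of_succ_lt_succ hlj)
    · obtain ⟨j, hij, hj, hbetween⟩ := ih h ⟨i, Nat.lt_of_succ_lt_succ hi'⟩ hi
      refine ⟨j.succ.cast (by simp [run]), Nat.succ_lt_succ hij, hj,
        fun ⟨l, hl⟩ hil hlj => ?_⟩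
      cases l with
      | zero => exact absurd hil (Nat.not_lt_zero _)
      | succ l =>
        exact hbetween ⟨l, Nat.lt_of_succ_lt_succ hl⟩ (Nat.lt_of_succ_lt_succ hil)
          (Nat.lt_of_succ_lt_succ hlj)

lemma RestrictedFrom.restricted {t : KTree α} {ops : List Op} (h : RestrictedFrom [] ops) :
    Restricted t ops := by
  refine ⟨fun x hx => ?_, RestrictedFrom.returnsToRoot_after_rotation (s := (t, [])) h⟩
  rcases List.mem_cons.mp hx with rfl | hx
  · simp
  · exact RestrictedFrom.length_lt (s := (t, [])) h x hx

@[simp] lemma subtreeAt_nil (t : KTree α) : subtreeAt t [] = some t := by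
  cases t <;> rfl

lemma subtreeAt_node_cons (l r : KTree α) (x : α) (d : Dir) (p : TPath) :
    subtreeAt (.node l x r) (d :: p) = subtreeAt ((KTree.node l x r).child d) p := by
  cases d <;> rfl

lemma subtreeAt_append (t : KTree α) (p q : TPath) :
    subtreeAt t (p ++ q) = (subtreeAt t p).bind (subtreeAt · q) := by
  induction p generalizing t with
  | nil => cases t <;> rfl
  | cons d p ih =>
    cases t with
    | leaf => rfl
    | node l x r => simp only [List.cons_append, subtreeAt_node_cons, ih]

lemma subtreeAt_concat {t w : KTree α} {p : TPath} (h : subtreeAt t p = some w)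
    (hw : w ≠ .leaf) (d : Dir) : subtreeAt t (p ++ [d]) = some (w.child d) := by
  rw [subtreeAt_append, h]
  cases w with
  | leaf => contradiction
  | node l x r => cases d <;> simp [subtreeAt, KTree.child]

lemma exists_parent_of_subtreeAt_concat {t u : KTree α} {p : TPath} {d : Dir}
    (h : subtreeAt t (p ++ [d]) = some u) :
    ∃ w, subtreeAt t p = some w ∧ w ≠ .leaf ∧ w.child d = u := by
  rw [subtreeAt_append] at h
  obtain ⟨w, hw, hu⟩ := Option.bind_eq_some_iff.mp h
  cases w with
  | leaf => cases hu
  | node l x r =>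
    refine ⟨_, hw, nofun, ?_⟩
    cases d <;> simpa [subtreeAt, KTree.child] using hu

lemma rotateAt_singleton (t : KTree α) (d : Dir) : rotateAt t [d] = rotateRoot t d := by
  cases t <;> cases d <;> rfl

lemma subtreeAt_rotateAt_concat {t w : KTree α} {q : TPath} (h : subtreeAt t q = some w)
    (d : Dir) : subtreeAt (rotateAt t (q ++ [d])) q = some (rotateRoot w d) := by
  induction q generalizing t with
  | nil =>
    obtain rfl : t = w := by simpa using h
    simp [rotateAt_singleton]
  | cons e q ih =>
    cases t with
    | leaf => cases h
    | node l x r =>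
      rcases q with _ | ⟨e', q⟩ <;> cases e <;> exact ih h

lemma rotateRoot_ne_leaf {w : KTree α} (hw : w ≠ .leaf) (d : Dir) :
    rotateRoot w d ≠ .leaf := by
  rcases w with _ | ⟨_ | _, _, _ | _⟩ <;> cases d <;> simp_all [rotateRoot]

@[simp] lemma rotateRoot_node_L (a b c : KTree α) (x y : α) :
    rotateRoot (.node (.node a x b) y c) .L = .node a x (.node b y c) := by
  cases c <;> rfl

@[simp] lemma rotateRoot_node_R (a b c : KTree α) (x y : α) :
    rotateRoot (.node a y (.node b x c)) .R = .node (.node a y b) x c := by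
  cases a <;> rfl

/-- `pred` and `succ` are the in-order neighbours of the cursor's subtree among its ancestors;
`left` and `right` hold the keys of `T` beyond them. -/
structure Frame (γ : Type*) where
  left : KTree γ
  pred : γ
  succ : γ
  right : KTree γ

def Frame.descend (f : α → γ) (F : Frame γ) : KTree α → Dir → Frame γ
  | .node _ x r, .L => { F with succ := f x, right := .node (r.map f) F.succ F.right }
  | .node l x _, .R => { F with left := .node F.left F.pred (l.map f), pred := f x }
  | .leaf, _ => F

def Frame.plug (f : α → γ) (F : Frame γ) : KTree α → KTree γ
  | .node l x r => .node (.node F.left F.pred (l.map f)) (f x) (.node (r.map f) F.succ F.right)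
  | .leaf => .leaf

def frameAt (f : α → γ) : Frame γ → KTree α → TPath → Frame γ
  | F, _, [] => F
  | F, t, d :: p => frameAt f (F.descend f t d) (t.child d) p

lemma frameAt_concat (f : α → γ) (F : Frame γ) {t w : KTree α} {p : TPath}
    (h : subtreeAt t p = some w) (d : Dir) :
    frameAt f F t (p ++ [d]) = (frameAt f F t p).descend f w d := by
  induction p generalizing F t with
  | nil => cases t <;> cases h <;> rfl
  | cons e p ih =>
    cases t with
    | leaf => cases h
    | node l x r => exact ih _ (by rwa [subtreeAt_node_cons] at h)

lemma frameAt_rotateAt_concat (f : α → γ) (F : Frame γ) (t : KTree α) (q : TPath) (d : Dir) :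
    frameAt f F (rotateAt t (q ++ [d])) q = frameAt f F t q := by
  induction q generalizing F t with
  | nil => rfl
  | cons e q ih =>
    cases t with
    | leaf => rcases q with _ | ⟨e', q⟩ <;> cases e <;> rfl
    | node l x r =>
      rcases q with _ | ⟨e', q⟩
      · cases e <;> rfl
      · cases e <;> exact ih _ _

structure Implements (o : Op) (S S' : KTree γ) (c : List Op) : Prop where
  ne_nil : c ≠ []
  exec_eq : exec (S, []) c = (S', [])
  valid : ValidOps (S, []) c
  restricted : RestrictedFrom [] c
  moves_le : moves c ≤ 4 * moves [o] + 3 * rotations [o]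
  rotations_le : rotations c ≤ 2 * moves [o] + rotations [o]

/- For a move to the `d`-child, the child sits two levels down, below a frame node, and a double
rotation brings it to the root. For a move up, the parent is a frame node; it is rotated to
the root and the old cursor node sinks below its own frame node. A rotation at the cursor is a
single rotation sinking the parent below the next frame node. -/

def downChunk (d : Dir) : List Op := [.down d, .down d.opp, .rotate, .up, .down d, .rotate]

def upChunk (d : Dir) : List Op := [.down d.opp, .rotate, .down d, .down d, .rotate, .up]

def rotateChunk (d : Dir) : List Op := [.down d.opp, .down d.opp, .rotate, .up]

lemma implements_down (f : α → γ) (F : Frame γ) {w : KTree α} {d : Dir} (hw : w ≠ .leaf)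
    (hc : w.child d ≠ .leaf) :
    Implements (.down d) (F.plug f w) ((F.descend f w d).plug f (w.child d)) (downChunk d) := by
  rcases w with _ | ⟨l, x, r⟩
  · contradiction
  cases d <;> [rcases l with _ | ⟨a, y, b⟩; rcases r with _ | ⟨a, y, b⟩] <;>
    first
    | contradiction
    | constructor <;> simp [downChunk, exec, Frame.plug, Frame.descend, KTree.child, ValidOps,
        RestrictedFrom, ReturnsToRoot, nextPath, moves, rotations, Op.isMove, Dir.opp, step,
        rotateAt, keyAt, subtreeAt, KTree.map]

lemma implements_up (f : α → γ) (F : Frame γ) {w : KTree α} {d : Dir} (hw : w ≠ .leaf)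
    (hc : w.child d ≠ .leaf) :
    Implements .up ((F.descend f w d).plug f (w.child d)) (F.plug f w) (upChunk d) := by
  rcases w with _ | ⟨l, x, r⟩
  · contradiction
  cases d <;> [rcases l with _ | ⟨a, y, b⟩; rcases r with _ | ⟨a, y, b⟩] <;>
    first
    | contradiction
    | constructor <;> simp [upChunk, exec, Frame.plug, Frame.descend, KTree.child, ValidOps,
        RestrictedFrom, ReturnsToRoot, nextPath, moves, rotations, Op.isMove, Dir.opp, step,
        rotateAt, keyAt, subtreeAt, KTree.map]

lemma implements_rotate (f : α → γ) (F : Frame γ) {w : KTree α} {d : Dir} (hw : w ≠ .leaf)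
    (hc : w.child d ≠ .leaf) :
    Implements .rotate ((F.descend f w d).plug f (w.child d)) (F.plug f (rotateRoot w d))
      (rotateChunk d) := by
  rcases w with _ | ⟨l, x, r⟩
  · contradiction
  cases d <;> [rcases l with _ | ⟨a, y, b⟩; rcases r with _ | ⟨a, y, b⟩] <;>
    first
    | contradiction
    | constructor <;> simp [rotateChunk, exec, Frame.plug, Frame.descend, KTree.child, ValidOps,
        RestrictedFrom, ReturnsToRoot, nextPath, moves, rotations, Op.isMove, Dir.opp, step,
        rotateAt, keyAt, subtreeAt, KTree.map]

structure Simulates (f : α → γ) (s : KTree α × TPath) (ops : List Op) (S : KTree γ)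
    (ops' : List Op) : Prop where
  valid : ValidOps (S, []) ops'
  restricted : RestrictedFrom [] ops'
  moves_le : moves ops' ≤ 4 * moves ops + 3 * rotations ops
  rotations_le : rotations ops' ≤ 2 * moves ops + rotations ops
  sublist : ((visitedKeysFrom s ops).map f).Sublist (visitedKeysFrom (S, []) ops')

section

variable {f : α → γ} {s : KTree α × TPath} {S : KTree γ} {x : α}

lemma Simulates.nil (hx : keyAt s.1 s.2 = some x) (hS : keyAt S [] = some (f x)) :
    Simulates f s [] S [] :=
  ⟨trivial, trivial, le_rfl, le_rfl, by simp [visitedKeysFrom, run, hx, hS]⟩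

lemma Simulates.cons (hx : keyAt s.1 s.2 = some x) (hS : keyAt S [] = some (f x))
    {o : Op} {os c rest : List Op} {S' : KTree γ} (hc : Implements o S S' c)
    (h : Simulates f (step s o) os S' rest) : Simulates f s (o :: os) S (c ++ rest) where
  valid := (validOps_append _ _ _).mpr ⟨hc.valid, hc.exec_eq ▸ h.valid⟩
  restricted := RestrictedFrom.append (s := (S, [])) hc.restricted (by rw [hc.exec_eq])
    h.restricted
  moves_le := by
    have := hc.moves_le; have := h.moves_le
    simp only [moves_append, rotations_append, ← List.singleton_append (l := os)] at *
    omega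
  rotations_le := by
    have := hc.rotations_le; have := h.rotations_le
    simp only [moves_append, rotations_append, ← List.singleton_append (l := os)] at *
    omega
  sublist := by
    have hstart : visitedKeysFrom (S, []) (c ++ rest) =
        f x :: (run (S, []) (c ++ rest)).filterMap fun s => keyAt s.1 s.2 := by
      simp [visitedKeysFrom, hS]
    have hsuffix := suffix_run_append hc.ne_nil (S, []) rest
    rw [hc.exec_eq] at hsuffix
    rw [visitedKeysFrom_cons hx, List.map_cons, hstart]
    exact (h.sublist.trans (hsuffix.sublist.filterMap _)).cons_cons _

end

lemma exists_keyAt_of_subtreeAt (f : α → γ) {t w : KTree α} {p : TPath}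
    (hw : subtreeAt t p = some w) (hne : w ≠ .leaf) :
    ∃ x, keyAt t p = some x ∧ ∀ F : Frame γ, keyAt (F.plug f w) [] = some (f x) := by
  rcases w with _ | ⟨l, x, r⟩
  · contradiction
  exact ⟨x, by simp [keyAt, hw], fun _ => rfl⟩

theorem exists_simulates (f : α → γ) (F₀ : Frame γ) (ops : List Op) {t w : KTree α}
    {p : TPath} (hw : subtreeAt t p = some w) (hne : w ≠ .leaf) (hvalid : ValidOps (t, p) ops) :
    ∃ ops', Simulates f (t, p) ops ((frameAt f F₀ t p).plug f w) ops' := by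
  induction ops generalizing t w p with
  | nil =>
    obtain ⟨x, hx, hS⟩ := exists_keyAt_of_subtreeAt f hw hne
    exact ⟨[], .nil hx (hS _)⟩
  | cons o os ih =>
    obtain ⟨x, hx, hS⟩ := exists_keyAt_of_subtreeAt f hw hne
    obtain ⟨ho, hvalid⟩ := hvalid
    cases o with
    | down d =>
      have hsub := subtreeAt_concat hw hne d
      have hc : w.child d ≠ .leaf := by
        intro h
        simp [keyAt, hsub, h] at ho
      obtain ⟨rest, hrest⟩ := ih hsub hc hvalid
      rw [frameAt_concat f F₀ hw] at hrest
      exact ⟨_, hrest.cons hx (hS _) (implements_down f _ hne hc)⟩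
    | up =>
      obtain ⟨q, d, rfl⟩ := (List.eq_nil_or_concat' p).resolve_left ho
      obtain ⟨v, hv, hvne, rfl⟩ := exists_parent_of_subtreeAt_concat hw
      obtain ⟨rest, hrest⟩ := ih hv hvne (by simpa [step] using hvalid)
      have hc := implements_up f (frameAt f F₀ t q) hvne hne
      rw [← frameAt_concat f F₀ hv] at hc
      exact ⟨_, Simulates.cons hx (hS _) hc (by simpa [step] using hrest)⟩
    | rotate =>
      obtain ⟨q, d, rfl⟩ := (List.eq_nil_or_concat' p).resolve_left ho
      obtain ⟨v, hv, hvne, rfl⟩ := exists_parent_of_subtreeAt_concat hw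
      obtain ⟨rest, hrest⟩ := ih (subtreeAt_rotateAt_concat hv d) (rotateRoot_ne_leaf hvne d)
        (by simpa [step] using hvalid)
      have hc := implements_rotate f (frameAt f F₀ t q) hvne hne
      rw [← frameAt_concat f F₀ hv, ← frameAt_rotateAt_concat f F₀ t q d] at hc
      exact ⟨_, Simulates.cons hx (hS _) hc (by simpa [step] using hrest)⟩

end BSTSim

theorem simulation_general {α : Type*} (T : KTree α) (ops : List Op)
    (hvalid : ValidOps (T, ([] : TPath)) ops)
    (M R : ℕ)
    (hM : M = (ops.filter fun o => o.isMove).length)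
    (hR : R = (ops.filter fun o => o = Op.rotate).length) :
    ∃ (T' : KTree (WithBot (WithTop α))) (ops' : List Op),
      keys T' = (⊥ : WithBot (WithTop α)) ::ₘ
          ((⊤ : WithTop α) : WithBot (WithTop α)) ::ₘ
          (keys T).map (fun a => ((a : WithTop α) : WithBot (WithTop α))) ∧
      ValidOps (T', ([] : TPath)) ops' ∧
      (ops'.filter fun o => o.isMove).length ≤ 4 * M + 3 * R ∧
      (ops'.filter fun o => o = Op.rotate).length ≤ 2 * M + R ∧
      Restricted T' ops' ∧
      ((visitedKeys T ops).map
          (fun a => ((a : WithTop α) : WithBot (WithTop α)))).Sublist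
        (visitedKeys T' ops') := by
  -- the coercion `α → WithTop α` in the statement elaborates as a bind in the list monads
  simp only [Multiset.pure_def, Multiset.bind_def, Multiset.bind_singleton, List.pure_def,
    List.bind_eq_flatMap, ← List.map_eq_flatMap, Multiset.map_map, List.map_map]
  cases T with
  | leaf =>
    obtain rfl : ops = [] := by
      rcases ops with _ | ⟨_ | _ | _, _⟩ <;> simp_all [ValidOps, keyAt, subtreeAt]
    exact ⟨.node .leaf ⊥ (.node .leaf ((⊤ : WithTop α) : WithBot (WithTop α)) .leaf), [],
      by simp [keys], trivial, by simp, by simp, BSTSim.RestrictedFrom.restricted trivial,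
      by simp [visitedKeys, run, keyAt]⟩
  | node l x r =>
    obtain ⟨ops', h⟩ :=
      BSTSim.exists_simulates (fun a : α => ((a : WithTop α) : WithBot (WithTop α)))
        ⟨.leaf, ⊥, ((⊤ : WithTop α) : WithBot (WithTop α)), .leaf⟩ ops
        (BSTSim.subtreeAt_nil (.node l x r)) nofun hvalid
    refine ⟨_, ops', ?_, h.valid, hM ▸ hR ▸ h.moves_le, hM ▸ hR ▸ h.rotations_le,
      h.restricted.restricted, h.sublist⟩
    simp [BSTSim.Frame.plug, BSTSim.frameAt, keys, KTree.keys_map, Multiset.cons_swap]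

/-- **Simulation lemma.**  Every valid access sequence on `T` with `M` cursor
    moves and `R` rotations can be simulated by a valid restricted sequence on
    a tree `T'` whose keys are those of `T` together with two sentinels `⊥`
    (smaller than all keys) and `⊤` (larger than all keys), using at most
    `4M + 3R` moves and `2M + R` rotations, and such that the key sequence
    visited by `T`'s cursor is a subsequence of that visited by `T'`'s cursor. -/
theorem simulation {α : Type*} [LinearOrder α] (T : KTree α) (ops : List Op)
    (hvalid : ValidOps (T, ([] : TPath)) ops)
    (M R : ℕ)
    (hM : M = (ops.filter fun o => o.isMove).length)
    (hR : R = (ops.filter fun o => o = Op.rotate).length) :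
    ∃ (T' : KTree (WithBot (WithTop α))) (ops' : List Op),
      keys T' = (⊥ : WithBot (WithTop α)) ::ₘ
          ((⊤ : WithTop α) : WithBot (WithTop α)) ::ₘ
          (keys T).map (fun a => ((a : WithTop α) : WithBot (WithTop α))) ∧
      ValidOps (T', ([] : TPath)) ops' ∧
      (ops'.filter fun o => o.isMove).length ≤ 4 * M + 3 * R ∧
      (ops'.filter fun o => o = Op.rotate).length ≤ 2 * M + R ∧
      Restricted T' ops' ∧
      ((visitedKeys T ops).map
          (fun a => ((a : WithTop α) : WithBot (WithTop α)))).Sublist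
        (visitedKeys T' ops') :=
  simulation_general T ops hvalid M R hM hR
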